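/- Let M be a matching on the leaves of T/I. If T' is a minimally semi-closed rooted subtree of T/I (with respect to M), then M(T') ∪ up(U') is an exact cover of T', where M(T') is the set of links of M with both endpoints in T' and U' is the set of M-unmatched leaves of T'. -/
import Mathlib


open scoped Classical

namespace TAP

/-- A rooted tree on vertex set `V`, given by a parent function. -/
structure Tree (V : Type) where
  root : V
  parent : V → V
  parent_root : parent root = root
  reach : ∀ v, ∃ n, parent^[n] v = root

namespace Tree

variable {V : Type} (t : Tree V)

/-- `t.desc w v` : `v` lies in the rooted subtree `T_w`, i.e. `w` is an ancestor of `v` or `w = v`. -/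
def desc (w v : V) : Prop := ∃ n, t.parent^[n] v = w

/-- The depth of a node (its distance to the root). -/
noncomputable def depth (v : V) : ℕ :=
  @Nat.find (fun n => t.parent^[n] v = t.root) (Classical.decPred _) (t.reach v)

/-- `v` is a leaf of the tree: it is not the root and it has no children. -/
def IsLeaf (v : V) : Prop := v ≠ t.root ∧ ∀ u, u ≠ v → t.parent u ≠ v

/-- The tree edge `(w, parent w)` (for `w ≠ root`) lies on the tree path `P(u,v)`. -/
def onPath (w u v : V) : Prop :=
  (t.desc w u ∧ ¬ t.desc w v) ∨ (t.desc w v ∧ ¬ t.desc w u)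

/-- The node `c` lies on the tree path `P(u,v)`. -/
def onPathNode (c u v : V) : Prop :=
  (t.desc c u ∨ t.desc c v) ∧ ∀ w, t.desc w u → t.desc w v → t.desc w c

/-- `u` is the least common ancestor of `a` and `b`. -/
def IsLCA (u a b : V) : Prop :=
  t.desc u a ∧ t.desc u b ∧ ∀ w, t.desc w a → t.desc w b → t.desc w u

end Tree

variable {V : Type} [Fintype V] [DecidableEq V]

/-- The link `e` covers the tree edge `(w, parent w)`. -/
def covers (t : Tree V) (e : Sym2 V) (w : V) : Prop :=
  ∃ u v, e = s(u, v) ∧ t.onPath w u v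

/-- Some link of `F` covers the tree edge `(w, parent w)`. -/
def coveredBy (t : Tree V) (F : Finset (Sym2 V)) (w : V) : Prop :=
  ∃ e ∈ F, covers t e w

/-- `F` covers the tree: every tree edge is covered by some link of `F`
(equivalently, `T ∪ F` is 2-edge-connected). -/
def IsCover (t : Tree V) (F : Finset (Sym2 V)) : Prop :=
  ∀ w, w ≠ t.root → coveredBy t F w

/-- `e'` is a shadow of `e`, i.e. `P(e') ⊆ P(e)`. -/
def Shadow (t : Tree V) (e' e : Sym2 V) : Prop := ∀ w, covers t e' w → covers t e w

/-- `e'` is a proper shadow of `e`. -/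
def ProperShadow (t : Tree V) (e' e : Sym2 V) : Prop :=
  Shadow t e' e ∧ ∃ w, covers t e w ∧ ¬ covers t e' w

/-- The link set `E` is closed under shadows. -/
def ShadowClosed (t : Tree V) (E : Finset (Sym2 V)) : Prop :=
  ∀ e ∈ E, ∀ e' : Sym2 V, ¬ e'.IsDiag → Shadow t e' e → e' ∈ E

/-- `F` is an (inclusion-minimal) shadows-minimal cover: replacing any link of `F` by a
proper shadow of it destroys the covering property. -/
def ShadowsMinimal (t : Tree V) (F : Finset (Sym2 V)) : Prop :=
  IsCover t F ∧ (∀ e ∈ F, ¬ IsCover t (F.erase e)) ∧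
  ∀ e ∈ F, ∀ e' : Sym2 V, ProperShadow t e' e → ¬ IsCover t (insert e' (F.erase e))

/-- `deg Y x` : the number of links of `Y` incident to `x`. -/
noncomputable def deg (Y : Finset (Sym2 V)) (x : V) : ℕ := (Y.filter (fun e => x ∈ e)).card

/-! ### Contraction of a set of links -/

/-- `u` and `v` lie in the same 2-edge-connected component of `T ∪ I`,
i.e. they get identified in `T/I`. -/
def rel (t : Tree V) (I : Finset (Sym2 V)) (u v : V) : Prop :=
  ∀ w, w ≠ t.root → t.onPath w u v → coveredBy t I w

def relSetoid (t : Tree V) (I : Finset (Sym2 V)) : Setoid V where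
  r := rel t I
  iseqv := by
    refine ⟨?_, ?_, ?_⟩
    · intro u w _ hp
      rcases hp with ⟨h1, h2⟩ | ⟨h1, h2⟩ <;> exact absurd h1 h2
    · intro u v h w hw hp
      refine h w hw ?_
      rcases hp with ⟨h1, h2⟩ | ⟨h1, h2⟩
      · exact Or.inr ⟨h1, h2⟩
      · exact Or.inl ⟨h1, h2⟩
    · intro u v x h1 h2 w hw hp
      by_cases hv : t.desc w v
      · rcases hp with ⟨ha, hb⟩ | ⟨ha, hb⟩
        · exact h2 w hw (Or.inl ⟨hv, hb⟩)
        · exact h1 w hw (Or.inr ⟨hv, hb⟩)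
      · rcases hp with ⟨ha, hb⟩ | ⟨ha, hb⟩
        · exact h1 w hw (Or.inl ⟨ha, hv⟩)
        · exact h2 w hw (Or.inr ⟨ha, hv⟩)

/-- The node set of the contracted tree `T/I`. -/
abbrev QT (t : Tree V) (I : Finset (Sym2 V)) : Type := Quotient (relSetoid t I)

noncomputable instance instFintypeQT (t : Tree V) (I : Finset (Sym2 V)) : Fintype (QT t I) :=
  @Quotient.fintype V _ (relSetoid t I) (Classical.decRel _)

/-- The node of `T/I` corresponding to the node `x` of `T`. -/
def qm (t : Tree V) (I : Finset (Sym2 V)) (x : V) : QT t I := Quotient.mk (relSetoid t I) x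

/-- The class of `u` is a (possibly compound) leaf of `T/I`. -/
def qleafRep (t : Tree V) (I : Finset (Sym2 V)) (u : V) : Prop :=
  ¬ rel t I u t.root ∧ ∀ v, rel t I (t.parent v) u → rel t I v u

/-- The class of `u` lies in the rooted subtree of `T/I` rooted at the class of `v`. -/
def qdescRep (t : Tree V) (I : Finset (Sym2 V)) (v u : V) : Prop :=
  ∃ w, t.desc w u ∧ rel t I w v

/-- The class of `u` is a compound node of `T/I` (a contracted component, or the root). -/
def qcompoundRep (t : Tree V) (I : Finset (Sym2 V)) (u : V) : Prop :=
  (∃ w, w ≠ u ∧ rel t I u w) ∨ rel t I u t.root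

/-- The node `x` of `T` lies in the rooted subtree of `T/I` whose root is the class `c`. -/
def inT (t : Tree V) (I : Finset (Sym2 V)) (c : QT t I) (x : V) : Prop :=
  qdescRep t I c.out x

/-- The node `d` of `T/I` lies in the rooted subtree of `T/I` whose root is `c`. -/
def below (t : Tree V) (I : Finset (Sym2 V)) (c d : QT t I) : Prop := inT t I c d.out

/-- The class of `x` is matched by the matching `M`. -/
def matchedRep (t : Tree V) (I M : Finset (Sym2 V)) (x : V) : Prop :=
  ∃ e ∈ M, ∃ z, z ∈ e ∧ rel t I z x

/-- The class of `x` lies on the path of `T/I` between the classes of `u` and of `v`. -/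
def qOnPathNode (t : Tree V) (I : Finset (Sym2 V)) (x u v : V) : Prop :=
  (qdescRep t I x u ∨ qdescRep t I x v) ∧
  ∀ w, qdescRep t I w u → qdescRep t I w v → qdescRep t I w x

/-- The class of `x` is the least common ancestor in `T/I` of the classes of `a` and `b`. -/
def qIsLCA (t : Tree V) (I : Finset (Sym2 V)) (x a b : V) : Prop :=
  qdescRep t I x a ∧ qdescRep t I x b ∧
  ∀ w, qdescRep t I w a → qdescRep t I w b → qdescRep t I w x

/-- Depth of the class of `x` in `T/I`. -/
noncomputable def qdepth (t : Tree V) (I : Finset (Sym2 V)) (x : V) : ℕ :=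
  (Finset.univ.filter (fun w => w ≠ t.root ∧ ¬ coveredBy t I w ∧ t.desc w x)).card

/-- `u` is an up-node of (the class of) `a` in `T/I` : among all links of `E` leaving the
class of `a`, some link from the class of `a` to `u` has its other end as close as possible
to the root. -/
def qUpNode (t : Tree V) (I E : Finset (Sym2 V)) (a u : V) : Prop :=
  (∃ b, rel t I b a ∧ s(b, u) ∈ E) ∧ ¬ rel t I u a ∧
  ∀ b x, rel t I b a → s(b, x) ∈ E → ¬ rel t I x a → qdepth t I u ≤ qdepth t I x

/-- `s(a,b)` is a twin link of `T/I` : a link of `E` between two distinct leaves of `T/I`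
whose contraction results in a new leaf. -/
def qTwinAt (t : Tree V) (I E : Finset (Sym2 V)) (a b : V) : Prop :=
  qleafRep t I a ∧ qleafRep t I b ∧ ¬ rel t I a b ∧ s(a, b) ∈ E ∧
  qleafRep t (insert (s(a, b)) I) a

/-- The class of `x` is a stem of `T/I` : the least common ancestor of the two ends
of a twin link. -/
def qStem (t : Tree V) (I E : Finset (Sym2 V)) (x : V) : Prop :=
  ∃ a b, qTwinAt t I E a b ∧ qIsLCA t I x a b

/-! ### Twin links, stems, up-links and locked leaves in the original tree -/

/-- `a` and `b` are twins: two leaves such that the contraction of the link `ab`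
results in a new leaf. -/
def TwinPair (t : Tree V) (a b : V) : Prop :=
  t.IsLeaf a ∧ t.IsLeaf b ∧ a ≠ b ∧ qleafRep t {s(a, b)} a

/-- `e` is a twin link. -/
def IsTwinLinkE (t : Tree V) (e : Sym2 V) : Prop := ∃ a b, e = s(a, b) ∧ TwinPair t a b

/-- `x` is a stem: the least common ancestor of two twins. -/
def IsStem (t : Tree V) (E : Finset (Sym2 V)) (x : V) : Prop :=
  ∃ a b, TwinPair t a b ∧ s(a, b) ∈ E ∧ t.IsLCA x a b

noncomputable def stems (t : Tree V) (E : Finset (Sym2 V)) : Finset V :=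
  Finset.univ.filter (IsStem t E)

/-- `X = V \ (L ∪ S)`. -/
noncomputable def Xset (t : Tree V) (E : Finset (Sym2 V)) : Finset V :=
  Finset.univ.filter (fun x => ¬ t.IsLeaf x ∧ ¬ IsStem t E x)

/-- `s(a,u)` is the up-link of `a` : among all links of `E` at `a`, its other end `u` is
as close as possible to the root (`u` is the up-node of `a`). -/
def IsUpLink (t : Tree V) (E : Finset (Sym2 V)) (a u : V) : Prop :=
  s(a, u) ∈ E ∧ ∀ x, s(a, x) ∈ E → t.depth u ≤ t.depth x

/-- The rooted subtree `T_v` is `a`-closed: it contains the up-node of `a`. -/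
def AClosed (t : Tree V) (E : Finset (Sym2 V)) (v a : V) : Prop :=
  ∀ u, IsUpLink t E a u → t.desc v u

/-- The rooted proper subtree `T_v` witnesses that the leaf `a` is locked by the link `bb'` :
`L(T_v) = {a,b,b'}`, `ab` is a twin link and `T_v` is `a`-closed. -/
def LocksAt (t : Tree V) (E : Finset (Sym2 V)) (b b' a v : V) : Prop :=
  v ≠ t.root ∧ s(b, b') ∈ E ∧ b ≠ b' ∧ b' ≠ a ∧
  {x | t.IsLeaf x ∧ t.desc v x} = {a, b, b'} ∧
  TwinPair t a b ∧ s(a, b) ∈ E ∧ AClosed t E v a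

/-- The leaf `a` is locked by the link `bb'`. -/
def Locks (t : Tree V) (E : Finset (Sym2 V)) (b b' a : V) : Prop :=
  ∃ v, LocksAt t E b b' a v

def IsLockedLeaf (t : Tree V) (E : Finset (Sym2 V)) (a : V) : Prop :=
  ∃ b b', Locks t E b b' a

def IsLockingLink (t : Tree V) (E : Finset (Sym2 V)) (e : Sym2 V) : Prop :=
  ∃ b b' a, e = s(b, b') ∧ Locks t E b b' a

/-- `T_v` is the locking tree of `a` (with locking link `bb'`): the minimal rooted subtree
witnessing the lock. -/
def IsLockingTree (t : Tree V) (E : Finset (Sym2 V)) (a b b' v : V) : Prop :=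
  LocksAt t E b b' a v ∧ ∀ v', LocksAt t E b b' a v' → t.desc v' v

/-! ### The fixed optimal cover `F` -/

noncomputable def twinCount (t : Tree V) (F : Finset (Sym2 V)) : ℕ :=
  (F.filter (fun e => IsTwinLinkE t e)).card

/-- `F` is an optimal (minimum-size) shadows-minimal cover of `T` with the maximum
number of twin links. -/
def IsGoodCover (t : Tree V) (E F : Finset (Sym2 V)) : Prop :=
  F ⊆ E ∧ ShadowsMinimal t F ∧
  (∀ F' : Finset (Sym2 V), F' ⊆ E → IsCover t F' → F.card ≤ F'.card) ∧
  (∀ F' : Finset (Sym2 V), F' ⊆ E → ShadowsMinimal t F' → F'.card = F.card →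
    twinCount t F' ≤ twinCount t F)

/-! ### Matchings and the lower bound -/

def IsMatching (M : Finset (Sym2 V)) : Prop :=
  (∀ e ∈ M, ¬ e.IsDiag) ∧ ∀ e ∈ M, ∀ f ∈ M, e ≠ f → ∀ x, x ∈ e → x ∉ f

/-- `E(L,L)` : the links of `E` joining two leaves. -/
noncomputable def leafLinks (t : Tree V) (E : Finset (Sym2 V)) : Finset (Sym2 V) :=
  E.filter (fun e => ∀ x ∈ e, t.IsLeaf x)

/-- `W` : the set of twin links and locking links. -/
noncomputable def Wlinks (t : Tree V) (E : Finset (Sym2 V)) : Finset (Sym2 V) :=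
  E.filter (fun e => IsTwinLinkE t e ∨ IsLockingLink t E e)

/-- `M` is a maximum matching in `E(L,L) \ W`. -/
def IsMaxLeafMatching (t : Tree V) (E M : Finset (Sym2 V)) : Prop :=
  M ⊆ leafLinks t E \ Wlinks t E ∧ IsMatching M ∧
  ∀ M' : Finset (Sym2 V), M' ⊆ leafLinks t E \ Wlinks t E → IsMatching M' → M'.card ≤ M.card

/-- `U` : the set of leaves unmatched by `M`. -/
noncomputable def unmatchedLeaves (t : Tree V) (M : Finset (Sym2 V)) : Finset V :=
  Finset.univ.filter (fun a => t.IsLeaf a ∧ ∀ e ∈ M, a ∉ e)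

/-- `M_F = F(L,L) \ W`. -/
noncomputable def MFlinks (t : Tree V) (E F : Finset (Sym2 V)) : Finset (Sym2 V) :=
  (F.filter (fun e => ∀ x ∈ e, t.IsLeaf x)) \ Wlinks t E

/-- `N = {bb' ∈ M : each of b, b' is unmatched by M_F}`. -/
noncomputable def Nlinks (t : Tree V) (E F M : Finset (Sym2 V)) : Finset (Sym2 V) :=
  M.filter (fun e => ∀ b ∈ e, ∀ f ∈ MFlinks t E F, b ∉ f)

/-- `J` : the set of links of `F` not incident to a locked leaf. -/
noncomputable def Jlinks (t : Tree V) (E F : Finset (Sym2 V)) : Finset (Sym2 V) :=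
  F.filter (fun e => ∀ x ∈ e, ¬ IsLockedLeaf t E x)

/-- The lower bound `(3/2)|M| + |U| + (1/2)|N| + (1/2) Σ_{x ∈ X} d_J(x)`. -/
noncomputable def LB (t : Tree V) (E F M : Finset (Sym2 V)) : ℚ :=
  (3 / 2 : ℚ) * (M.card : ℚ) + ((unmatchedLeaves t M).card : ℚ)
    + (1 / 2 : ℚ) * ((Nlinks t E F M).card : ℚ)
    + (1 / 2 : ℚ) * ∑ x ∈ Xset t E, (deg (Jlinks t E F) x : ℚ)

/-! ### Subtrees of `T/I`, semi-closed trees, credits -/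

/-- `T'` (the rooted subtree of `T/I` with root `c`) is `M`-compatible. -/
def MCompatible (t : Tree V) (I M : Finset (Sym2 V)) (c : QT t I) : Prop :=
  ∀ e ∈ M, (∀ x ∈ e, inT t I c x) ∨ (∀ x ∈ e, ¬ inT t I c x)

/-- `T'` is semi-closed (w.r.t. `M`): `M`-compatible and closed w.r.t. its unmatched leaves. -/
def SemiClosedQ (t : Tree V) (I E M : Finset (Sym2 V)) (c : QT t I) : Prop :=
  MCompatible t I M c ∧
  ∀ x y, s(x, y) ∈ E → inT t I c x → qleafRep t I x → ¬ matchedRep t I M x → inT t I c y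

/-- `T'` is minimally semi-closed. -/
def MinSemiClosedQ (t : Tree V) (I E M : Finset (Sym2 V)) (c : QT t I) : Prop :=
  SemiClosedQ t I E M c ∧
  ∀ c' : QT t I, below t I c c' → c' ≠ c → ¬ SemiClosedQ t I E M c'

/-- `I'` is an exact cover of `T'` : the set of edges of `T/I` covered by `I'` is exactly
the edge set of `T'`. -/
def IsExactCoverQ (t : Tree V) (I : Finset (Sym2 V)) (c : QT t I) (I' : Finset (Sym2 V)) : Prop :=
  ∀ w, w ≠ t.root → ¬ coveredBy t I w → (coveredBy t I' w ↔ inT t I c (t.parent w))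

/-- `up(U')` : the set of up-links of the unmatched leaves of `T'`. -/
noncomputable def upOfQ (t : Tree V) (I E M : Finset (Sym2 V)) (c : QT t I) :
    Finset (Sym2 V) :=
  E.filter (fun e => ∃ a u, e = s(a, u) ∧ inT t I c a ∧ qleafRep t I a ∧
    ¬ matchedRep t I M a ∧ qUpNode t I E a u)

/-- `M` is a matching on the leaves of `T/I`. -/
def IsLeafMatchingQ (t : Tree V) (I M : Finset (Sym2 V)) : Prop :=
  (∀ e ∈ M, ∃ a b, e = s(a, b) ∧ qleafRep t I a ∧ qleafRep t I b ∧ ¬ rel t I a b) ∧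
  ∀ e ∈ M, ∀ f ∈ M, e ≠ f → ∀ x, x ∈ e → ∀ y, y ∈ f → ¬ rel t I x y

/-- `L' = L(T')` as a set of nodes of `T/I`. -/
noncomputable def LsetQ (t : Tree V) (I : Finset (Sym2 V)) (c : QT t I) : Finset (QT t I) :=
  Finset.univ.filter (fun d => below t I c d ∧ qleafRep t I d.out)

/-- `U'` : the `M`-unmatched leaves of `T'`. -/
noncomputable def UsetQ (t : Tree V) (I M : Finset (Sym2 V)) (c : QT t I) : Finset (QT t I) :=
  Finset.univ.filter
    (fun d => below t I c d ∧ qleafRep t I d.out ∧ ¬ matchedRep t I M d.out)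

/-- `C'` : the non-leaf compound nodes of `T'`. -/
noncomputable def CsetQ (t : Tree V) (I : Finset (Sym2 V)) (c : QT t I) : Finset (QT t I) :=
  Finset.univ.filter
    (fun d => below t I c d ∧ qcompoundRep t I d.out ∧ ¬ qleafRep t I d.out)

/-- `M' = M(T')` : the links of `M` with both ends in `T'`. -/
noncomputable def MlinksQ (t : Tree V) (I M : Finset (Sym2 V)) (c : QT t I) :
    Finset (Sym2 V) :=
  M.filter (fun e => ∀ x ∈ e, inT t I c x)

/-- `S'` : the stems of `T'`. -/
noncomputable def SsetQ (t : Tree V) (I E : Finset (Sym2 V)) (c : QT t I) : Finset (QT t I) :=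
  Finset.univ.filter (fun d => below t I c d ∧ qStem t I E d.out)

/-- `S'_1` : the stems of `T'` whose twin link lies in `F`. -/
noncomputable def S1setQ (t : Tree V) (I E F : Finset (Sym2 V)) (c : QT t I) :
    Finset (QT t I) :=
  Finset.univ.filter (fun d => below t I c d ∧
    ∃ a b, qTwinAt t I E a b ∧ s(a, b) ∈ F ∧ qIsLCA t I d.out a b)

/-- `X'` : the original nodes of `T'` lying in `X`. -/
noncomputable def XsetQ (t : Tree V) (I E : Finset (Sym2 V)) (c : QT t I) : Finset (QT t I) :=
  Finset.univ.filter
    (fun d => below t I c d ∧ ¬ qcompoundRep t I d.out ∧ d.out ∈ Xset t E)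

/-- `tickets(T') = |N(T')| + Σ_{x ∈ X'} d_J(x)`. -/
noncomputable def ticketsQ (t : Tree V) (I E F M : Finset (Sym2 V)) (c : QT t I) : ℕ :=
  ((Nlinks t E F M).filter (fun e => ∀ x ∈ e, inT t I c x)).card
    + ∑ d ∈ XsetQ t I E c, deg (Jlinks t E F) d.out

/-- `coupons(T')` : one coupon for each unmatched leaf and each compound node of `T'`,
and `3/2` coupons for each link of `M(T')`. -/
noncomputable def couponsQ (t : Tree V) (I M : Finset (Sym2 V)) (c : QT t I) : ℚ :=
  ((Finset.univ.filter (fun d : QT t I => below t I c d ∧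
      ((qleafRep t I d.out ∧ ¬ matchedRep t I M d.out) ∨ qcompoundRep t I d.out))).card : ℚ)
    + (3 / 2 : ℚ) * ((MlinksQ t I M c).card : ℚ)

/-- `credit(T') = coupons(T') + tickets(T')/2`. -/
noncomputable def creditQ (t : Tree V) (I E F M : Finset (Sym2 V)) (c : QT t I) : ℚ :=
  couponsQ t I M c + (ticketsQ t I E F M c : ℚ) / 2

/-- `T'` is deficient: `credit(T') < |U'| + |M'| + 1`. -/
def DeficientQ (t : Tree V) (I E F M : Finset (Sym2 V)) (c : QT t I) : Prop :=
  creditQ t I E F M c < ((UsetQ t I M c).card : ℚ) + ((MlinksQ t I M c).card : ℚ) + 1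

/-! ### Invariants and greedy steps -/

/-- Credit Invariant: the credit of every subtree of `T/I` is distributed as described:
coupons on unmatched leaves, compound nodes and links of `M`, tickets on links of `N` and
original nodes of `X`. -/
def CreditInvariant (t : Tree V) (E F M I : Finset (Sym2 V)) : Prop :=
  F ⊆ E ∧ M ⊆ E ∧
  ∀ c : QT t I, creditQ t I E F M c = couponsQ t I M c + (ticketsQ t I E F M c : ℚ) / 2

/-- Degree in `T/I` : the number of links of `F` with exactly one end in the class of `x`. -/
noncomputable def qdegQ (t : Tree V) (I F : Finset (Sym2 V)) (x : V) : ℕ :=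
  (F.filter (fun e => (∃ z, z ∈ e ∧ rel t I z x) ∧ ∃ z, z ∈ e ∧ ¬ rel t I z x)).card

/-- Matching Invariant: `M` is a matching on the leaves of `T/I` and `d_F(b) = 1` for
every leaf `b` of `T/I` matched by `M`. -/
def MatchingInvariant (t : Tree V) (F M I : Finset (Sym2 V)) : Prop :=
  IsLeafMatchingQ t I M ∧ ∀ e ∈ M, ∀ b, b ∈ e → qdegQ t I F b = 1

/-- A greedy locking-tree contraction step. -/
def LockStep (t : Tree V) (E M : Finset (Sym2 V)) (I I₂ : Finset (Sym2 V)) : Prop :=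
  ∃ a b b' v u,
    IsLockingTree t E a b b' v ∧
    (∀ e ∈ M, a ∉ e) ∧ (∀ e ∈ M, b ∉ e) ∧ (∀ e ∈ M, b' ∉ e) ∧
    (∀ c c' v', IsLockingTree t E b c c' v' → t.desc v v') ∧
    IsUpLink t E a u ∧ I₂ = I ∪ {s(b, b'), s(a, u)}

/-- A greedy link contraction step: contract a link of `E` joining two `M`-unmatched
leaves of `T/I`. -/
def LinkStep (t : Tree V) (E M : Finset (Sym2 V)) (I I₂ : Finset (Sym2 V)) : Prop :=
  ∃ x y, s(x, y) ∈ E ∧ ¬ rel t I x y ∧ qleafRep t I x ∧ qleafRep t I y ∧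
    ¬ matchedRep t I M x ∧ ¬ matchedRep t I M y ∧ I₂ = insert (s(x, y)) I

/-- Contraction of a semi-closed tree with an exact cover. -/
def SemiStep (t : Tree V) (E M : Finset (Sym2 V)) (I I₂ : Finset (Sym2 V)) : Prop :=
  ∃ (c : QT t I) (I' : Finset (Sym2 V)), I' ⊆ E ∧ SemiClosedQ t I E M c ∧
    IsExactCoverQ t I c I' ∧ I₂ = I ∪ I'

/-- A sequence of greedy locking-tree contractions starting from the empty partial solution. -/
inductive LockPhase {V : Type} [Fintype V] [DecidableEq V]
    (t : Tree V) (E M : Finset (Sym2 V)) : Finset (Sym2 V) → Prop where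
  | base : LockPhase t E M ∅
  | step {I I₂ : Finset (Sym2 V)} :
      LockPhase t E M I → LockStep t E M I I₂ → LockPhase t E M I₂

/-- Partial Solution Invariant: `I` is obtained by first exhausting greedy locking-tree
contractions, and then sequentially applying greedy link contractions or contractions of
semi-closed trees with exact covers. -/
inductive PSI {V : Type} [Fintype V] [DecidableEq V]
    (t : Tree V) (E M : Finset (Sym2 V)) : Finset (Sym2 V) → Prop where
  | start {I : Finset (Sym2 V)} :
      LockPhase t E M I → (∀ I₂, ¬ LockStep t E M I I₂) → PSI t E M I
  | link {I I₂ : Finset (Sym2 V)} : PSI t E M I → LinkStep t E M I I₂ → PSI t E M I₂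
  | semi {I I₂ : Finset (Sym2 V)} : PSI t E M I → SemiStep t E M I I₂ → PSI t E M I₂

/-! ### Dangerous trees -/

/-- The witness structure of a 3-leaf dangerous tree: `a` is the unmatched leaf,
`b, b'` are the matched leaves, `ab' ∈ E`, the contraction of `ab'` does not create a new
leaf, and `T'` is `b`-open. -/
def Witness3 (t : Tree V) (I E M : Finset (Sym2 V)) (c : QT t I) (a b b' : V) : Prop :=
  inT t I c a ∧ inT t I c b ∧ inT t I c b' ∧
  qleafRep t I a ∧ qleafRep t I b ∧ qleafRep t I b' ∧
  ¬ rel t I a b ∧ ¬ rel t I a b' ∧ ¬ rel t I b b' ∧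
  ¬ matchedRep t I M a ∧ matchedRep t I M b ∧ matchedRep t I M b' ∧
  (∃ x y, s(x, y) ∈ E ∧ rel t I x a ∧ rel t I y b' ∧
    ¬ qleafRep t (insert (s(x, y)) I) x) ∧
  (∃ u, qUpNode t I E b u ∧ ¬ inT t I c u)

/-- A 3-leaf dangerous tree. -/
def Dangerous3 (t : Tree V) (I E M : Finset (Sym2 V)) (c : QT t I) : Prop :=
  SemiClosedQ t I E M c ∧ (CsetQ t I c).card = 0 ∧ (MlinksQ t I M c).card = 1 ∧
  (LsetQ t I c).card = 3 ∧ (SsetQ t I E c).card = 0 ∧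
  ∃ a b b', Witness3 t I E M c a b b'

/-- A dangerous tree: a 3-leaf dangerous tree, or a 4-leaf tree with one stem, exactly one
twin of which is matched, such that contracting the twin link yields a 3-leaf dangerous tree. -/
def Dangerous (t : Tree V) (I E M : Finset (Sym2 V)) (c : QT t I) : Prop :=
  Dangerous3 t I E M c ∨
  (SemiClosedQ t I E M c ∧ (CsetQ t I c).card = 0 ∧ (MlinksQ t I M c).card = 1 ∧
    (LsetQ t I c).card = 4 ∧ (SsetQ t I E c).card = 1 ∧
    ∃ a b, qTwinAt t I E a b ∧ inT t I c a ∧ inT t I c b ∧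
      (matchedRep t I M a ↔ ¬ matchedRep t I M b) ∧
      Dangerous3 t (insert (s(a, b)) I) E M (qm t (insert (s(a, b)) I) c.out))

/-! ### The switching construction -/

/-- `W̃` : for every 4-leaf minimally semi-closed (dangerous) tree of `T/I`, its twin link. -/
noncomputable def Wtil (t : Tree V) (I E M : Finset (Sym2 V)) : Finset (Sym2 V) :=
  E.filter (fun e => ∃ (a b : V) (c : QT t I), e = s(a, b) ∧ MinSemiClosedQ t I E M c ∧
    (LsetQ t I c).card = 4 ∧ qTwinAt t I E a b ∧ inT t I c a ∧ inT t I c b)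

/-- The canonical ordering witness of a 3-leaf dangerous tree: if both orderings of the
matched leaves qualify, the up-node of `b` is an ancestor of the up-node of `b'`. -/
def Witness3Canon (t : Tree V) (I E M : Finset (Sym2 V)) (c : QT t I) (a b b' : V) : Prop :=
  Witness3 t I E M c a b b' ∧
  (Witness3 t I E M c a b' b →
    ∃ u u', qUpNode t I E b u ∧ qUpNode t I E b' u' ∧ qdescRep t I u u')

/-- `M̃` is obtained from `M` by switching, in each (3-leaf dangerous) tree `D̃` of `T̃`
corresponding to a minimally semi-closed tree of `T/I`, the matching link `bb'` to `ab'`. -/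
def SwitchedMatching (t : Tree V) (I E M Mt : Finset (Sym2 V)) : Prop :=
  ∀ e : Sym2 V, e ∈ Mt ↔
    ((e ∈ M ∧ ∀ c : QT t I, MinSemiClosedQ t I E M c →
        ∀ x, x ∈ e → ¬ inT t (I ∪ Wtil t I E M) (qm t (I ∪ Wtil t I E M) c.out) x) ∨
     (∃ (c : QT t I) (a b b' x y : V), MinSemiClosedQ t I E M c ∧
        Witness3Canon t (I ∪ Wtil t I E M) E M (qm t (I ∪ Wtil t I E M) c.out) a b b' ∧
        e = s(x, y) ∧ e ∈ E ∧ rel t (I ∪ Wtil t I E M) x a ∧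
        rel t (I ∪ Wtil t I E M) y b' ∧
        ¬ qleafRep t (insert e (I ∪ Wtil t I E M)) x))
/-! ### Auxiliary lemmas -/
set_option linter.unusedSectionVars false
set_option linter.unusedVariables false

namespace Tree

variable {V : Type} {t : Tree V}

lemma desc_refl (t : Tree V) (v : V) : t.desc v v := ⟨0, rfl⟩

lemma desc_trans {a b c : V} (h1 : t.desc a b) (h2 : t.desc b c) : t.desc a c := by
  obtain ⟨n, hn⟩ := h1; obtain ⟨m, hm⟩ := h2
  exact ⟨n + m, by rw [Function.iterate_add_apply, hm, hn]⟩

lemma desc_parent (t : Tree V) (v : V) : t.desc (t.parent v) v := ⟨1, rfl⟩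

lemma iter_root (t : Tree V) (n : ℕ) : t.parent^[n] t.root = t.root := by
  induction n with
  | zero => rfl
  | succ k ih => rw [Function.iterate_succ_apply, t.parent_root, ih]

lemma eq_root_of_parent_eq {v : V} (h : t.parent v = v) : v = t.root := by
  obtain ⟨k, hk⟩ := t.reach v
  have hall : ∀ n, t.parent^[n] v = v := by
    intro n; induction n with
    | zero => rfl
    | succ m ih => rw [Function.iterate_succ_apply, h, ih]
  rw [← hk, hall]

lemma desc_antisymm {a b : V} (h1 : t.desc a b) (h2 : t.desc b a) : a = b := by
  obtain ⟨n, hn⟩ := h1; obtain ⟨m, hm⟩ := h2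
  rcases Nat.eq_zero_or_pos (m + n) with h0 | hpos
  · have hn0 : n = 0 := by omega
    rw [← hn, hn0]; rfl
  · have hper : t.parent^[m + n] b = b := by
      rw [Function.iterate_add_apply, hn, hm]
    have hper' : ∀ j, t.parent^[(m + n) * j] b = b := by
      intro j; induction j with
      | zero => rfl
      | succ i ih => rw [Nat.mul_succ, Function.iterate_add_apply, hper, ih]
    obtain ⟨k, hk⟩ := t.reach b
    have hb : b = t.root := by
      have h1 := hper' k
      rw [show (m + n) * k = ((m + n) * k - k) + k by
            have : k ≤ (m + n) * k := Nat.le_mul_of_pos_left k hpos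
            omega,
          Function.iterate_add_apply, hk, t.iter_root] at h1
      exact h1.symm
    rw [← hn, hb, t.iter_root]

lemma comparable {w w' a : V} (h1 : t.desc w a) (h2 : t.desc w' a) :
    t.desc w w' ∨ t.desc w' w := by
  obtain ⟨n, hn⟩ := h1; obtain ⟨m, hm⟩ := h2
  rcases le_total n m with h | h
  · right
    exact ⟨m - n, by rw [← hn, ← Function.iterate_add_apply, Nat.sub_add_cancel h, hm]⟩
  · left
    exact ⟨n - m, by rw [← hm, ← Function.iterate_add_apply, Nat.sub_add_cancel h, hn]⟩

lemma desc_parent_of_ne {w₀ w : V} (h : t.desc w₀ w) (hne : w₀ ≠ w) :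
    t.desc w₀ (t.parent w) := by
  obtain ⟨n, hn⟩ := h
  match n, hn with
  | 0, hn => exact absurd hn.symm hne
  | k + 1, hn => exact ⟨k, by rw [← Function.iterate_succ_apply, hn]⟩

lemma lca (t : Tree V) (x y : V) :
    ∃ z, t.desc z x ∧ t.desc z y ∧ ∀ w, t.desc w x → t.desc w y → t.desc w z := by
  classical
  have hex : ∃ n, t.desc (t.parent^[n] x) y := by
    obtain ⟨k, hk⟩ := t.reach x
    obtain ⟨m, hm⟩ := t.reach y
    exact ⟨k, by rw [hk]; exact ⟨m, hm⟩⟩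
  refine ⟨t.parent^[Nat.find hex] x, ⟨Nat.find hex, rfl⟩, Nat.find_spec hex, ?_⟩
  rintro w ⟨m, hm⟩ hwy
  by_cases hlt : m < Nat.find hex
  · exact absurd (by rw [hm]; exact hwy) (Nat.find_min hex hlt)
  · push_neg at hlt
    exact ⟨m - Nat.find hex, by
      rw [← Function.iterate_add_apply, Nat.sub_add_cancel hlt, hm]⟩

lemma onPath_symm {w u v : V} (h : t.onPath w u v) : t.onPath w v u := h.symm

end Tree

section Aux

variable {V : Type} [Fintype V] [DecidableEq V] {t : Tree V} {I E M : Finset (Sym2 V)}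

lemma rel_refl (t : Tree V) (I : Finset (Sym2 V)) (v : V) : rel t I v v :=
  (relSetoid t I).iseqv.refl v

lemma rel_symm {u v : V} (h : rel t I u v) : rel t I v u :=
  (relSetoid t I).iseqv.symm h

lemma rel_trans {u v w : V} (h1 : rel t I u v) (h2 : rel t I v w) : rel t I u w :=
  (relSetoid t I).iseqv.trans h1 h2

lemma rel_desc_iff {x y w : V} (hrel : rel t I x y) (hw : w ≠ t.root)
    (hcov : ¬ coveredBy t I w) : t.desc w x ↔ t.desc w y := by
  constructor
  · intro h; by_contra hy; exact hcov (hrel w hw (Or.inl ⟨h, hy⟩))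
  · intro h; by_contra hx; exact hcov (hrel w hw (Or.inr ⟨h, hx⟩))

lemma rel_between {x z w' : V} (hxz : rel t I x z) (h1 : t.desc z w') (h2 : t.desc w' x) :
    rel t I w' z := by
  intro w hw hp
  rcases hp with ⟨ha, hb⟩ | ⟨ha, hb⟩
  · exact hxz w hw (Or.inl ⟨Tree.desc_trans ha h2, hb⟩)
  · exact absurd (Tree.desc_trans ha h1) hb

lemma rel_lca {x y z : V} (hxy : rel t I x y) (hzx : t.desc z x) (hzy : t.desc z y)
    (hmax : ∀ w, t.desc w x → t.desc w y → t.desc w z) : rel t I x z := by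
  intro w hw hp
  rcases hp with ⟨ha, hb⟩ | ⟨ha, hb⟩
  · exact hxy w hw (Or.inl ⟨ha, fun hy => hb (hmax w ha hy)⟩)
  · exact absurd (Tree.desc_trans ha hzx) hb

lemma inT_invar {c : QT t I} {x y : V} (hxy : rel t I x y) (hx : inT t I c x) :
    inT t I c y := by
  obtain ⟨w', h1, h2⟩ := hx
  obtain ⟨z, hzx, hzy, hmax⟩ := t.lca x y
  rcases Tree.comparable h1 hzx with hc | hc
  · exact ⟨w', Tree.desc_trans hc hzy, h2⟩
  · have hw'z : rel t I w' z := rel_between (rel_lca hxy hzx hzy hmax) hc h1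
    exact ⟨z, hzy, rel_trans (rel_symm hw'z) h2⟩

lemma rel_out_qm (t : Tree V) (I : Finset (Sym2 V)) (w : V) :
    rel t I (qm t I w).out w :=
  Quotient.exact (Quotient.out_eq (qm t I w))

lemma inT_qm_iff {w : V} (hw : w ≠ t.root) (hcov : ¬ coveredBy t I w) (x : V) :
    inT t I (qm t I w) x ↔ t.desc w x := by
  constructor
  · rintro ⟨w₂, h1, h2⟩
    have hr : rel t I w₂ w := rel_trans h2 (rel_out_qm t I w)
    have hd : t.desc w w₂ := (rel_desc_iff hr hw hcov).mpr (Tree.desc_refl t w)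
    exact Tree.desc_trans hd h1
  · intro h
    exact ⟨w, h, rel_symm (rel_out_qm t I w)⟩

lemma inT_of_inT_qm {c : QT t I} {w x : V} (hw : w ≠ t.root) (hcov : ¬ coveredBy t I w)
    (hinw : inT t I c w) (hx : inT t I (qm t I w) x) : inT t I c x := by
  obtain ⟨w', h1, h2⟩ := hinw
  exact ⟨w', Tree.desc_trans h1 ((inT_qm_iff hw hcov x).mp hx), h2⟩

lemma qdepth_lt {w u : V} (hw : w ≠ t.root) (hcov : ¬ coveredBy t I w)
    (h : t.desc w u) : qdepth t I (t.parent w) < qdepth t I u := by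
  apply Finset.card_lt_card
  rw [Finset.ssubset_def]
  constructor
  · intro v hv
    simp only [Finset.mem_filter, Finset.mem_univ, true_and] at hv ⊢
    exact ⟨hv.1, hv.2.1,
      Tree.desc_trans (Tree.desc_trans hv.2.2 (t.desc_parent w)) h⟩
  · intro hsub
    have hwmem : w ∈ Finset.univ.filter
        (fun w' => w' ≠ t.root ∧ ¬ coveredBy t I w' ∧ t.desc w' u) := by
      simp only [Finset.mem_filter, Finset.mem_univ, true_and]
      exact ⟨hw, hcov, h⟩
    have hw2 := hsub hwmem
    simp only [Finset.mem_filter, Finset.mem_univ, true_and] at hw2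
    have heq : w = t.parent w := Tree.desc_antisymm hw2.2.2 (t.desc_parent w)
    exact hw (Tree.eq_root_of_parent_eq heq.symm)

lemma exists_upnode {x y : V} (hE : s(x, y) ∈ E) (hnrel : ¬ rel t I y x) :
    ∃ b u, rel t I b x ∧ s(b, u) ∈ E ∧ qUpNode t I E x u := by
  classical
  set S := (Finset.univ ×ˢ Finset.univ).filter
    (fun p : V × V => rel t I p.1 x ∧ s(p.1, p.2) ∈ E ∧ ¬ rel t I p.2 x) with hS
  have hne : S.Nonempty := ⟨(x, y), Finset.mem_filter.mpr
    ⟨Finset.mem_product.mpr ⟨Finset.mem_univ _, Finset.mem_univ _⟩,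
      rel_refl t I x, hE, hnrel⟩⟩
  obtain ⟨p, hp, hmin⟩ := S.exists_min_image (fun p => qdepth t I p.2) hne
  simp only [hS, Finset.mem_filter] at hp
  refine ⟨p.1, p.2, hp.2.1, hp.2.2.1, ⟨p.1, hp.2.1, hp.2.2.1⟩, hp.2.2.2, ?_⟩
  intro b z hb hbz hz
  exact hmin (b, z) (Finset.mem_filter.mpr
    ⟨Finset.mem_product.mpr ⟨Finset.mem_univ _, Finset.mem_univ _⟩, hb, hbz, hz⟩)

lemma shadow_parent {x y w : V} (hdx : t.desc w x) (hdy : ¬ t.desc w y) :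
    Shadow t s(x, t.parent w) s(x, y) := by
  obtain ⟨z, hzx, hzy, hmax⟩ := t.lca x y
  have hzw : t.desc z w := by
    rcases Tree.comparable hdx hzx with h | h
    · exact absurd (Tree.desc_trans h hzy) hdy
    · exact h
  have hzne : z ≠ w := fun h => hdy (h ▸ hzy)
  have hzp : t.desc z (t.parent w) := Tree.desc_parent_of_ne hzw hzne
  intro w' hcov'
  obtain ⟨p, q, hpq, hpath⟩ := hcov'
  have hP : t.onPath w' x (t.parent w) := by
    rcases Sym2.eq_iff.mp hpq with ⟨hx1, hx2⟩ | ⟨hx1, hx2⟩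
    · rw [← hx1, ← hx2] at hpath; exact hpath
    · rw [← hx1, ← hx2] at hpath; exact hpath.symm
  refine ⟨x, y, rfl, ?_⟩
  rcases hP with ⟨h1, h2⟩ | ⟨h1, h2⟩
  · exact Or.inl ⟨h1, fun hy => h2 (Tree.desc_trans (hmax w' h1 hy) hzp)⟩
  · refine Or.inr ⟨?_, h2⟩
    rcases Tree.comparable h1 hzp with h | h
    · exact Tree.desc_trans h hzy
    · exact absurd
        (Tree.desc_trans (Tree.desc_trans h1 (t.desc_parent w)) hdx) h2

lemma qleaf_invar {b x : V} (h : rel t I b x) (hx : qleafRep t I x) :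
    qleafRep t I b := by
  obtain ⟨h1, h2⟩ := hx
  refine ⟨fun hr => h1 (rel_trans (rel_symm h) hr), fun v hv => ?_⟩
  exact rel_trans (h2 v (rel_trans hv h)) (rel_symm h)

lemma matched_invar {b x : V} {M : Finset (Sym2 V)} (h : rel t I b x)
    (hx : ¬ matchedRep t I M x) : ¬ matchedRep t I M b := by
  rintro ⟨e, he, z, hz, hr⟩
  exact hx ⟨e, he, z, hz, rel_trans hr h⟩

lemma qUpNode_invar {b x u : V} (h : rel t I b x) (hx : qUpNode t I E x u) :
    qUpNode t I E b u := by
  obtain ⟨⟨b', hb', hbE⟩, hnux, hm⟩ := hx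
  refine ⟨⟨b', rel_trans hb' (rel_symm h), hbE⟩,
    fun hr => hnux (rel_trans hr h), ?_⟩
  intro b₂ x₂ hb₂ hE₂ hx₂
  exact hm b₂ x₂ (rel_trans hb₂ h) hE₂ (fun hr => hx₂ (rel_trans hr (rel_symm h)))

end Aux
/-- if `M` is a matching on the leaves of `T/I` and `T'` is a minimally
semi-closed rooted subtree of `T/I`, then `M(T') ∪ up(U')` is an exact cover of `T'`. -/
theorem min_semiclosed_exact_cover (t : Tree V) (E M I : Finset (Sym2 V))
    (hnd : ∀ e ∈ E, ¬ e.IsDiag) (hsh : ShadowClosed t E) (hEcov : IsCover t E)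
    (hME : M ⊆ E) (hlm : IsLeafMatchingQ t I M)
    (c : QT t I) (hmin : MinSemiClosedQ t I E M c) :
    IsExactCoverQ t I c (MlinksQ t I M c ∪ upOfQ t I E M c) := by
  classical
  obtain ⟨⟨hcompat, hclosed⟩, hminimal⟩ := hmin
  intro w hwroot hwcov
  constructor
  · -- forward direction: links of the cover only cover edges of `T'`
    rintro ⟨e, he, hcov⟩
    have lemA : ∀ a b : V, t.desc w a → ¬ t.desc w b → inT t I c a → inT t I c b →
        inT t I c (t.parent w) := by
      rintro a b hda hdb ⟨w₀, h0a, h0c⟩ ⟨w₁, h1b, h1c⟩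
      have hnw1 : ¬ t.desc w w₁ := fun h => hdb (Tree.desc_trans h h1b)
      rcases Tree.comparable h0a hda with hc1 | hc1
      · by_cases hew : w₀ = w
        · subst hew
          exact absurd ((rel_trans h0c (rel_symm h1c)) w₀ hwroot
            (Or.inl ⟨Tree.desc_refl t w₀, hnw1⟩)) hwcov
        · exact ⟨w₀, Tree.desc_parent_of_ne hc1 hew, h0c⟩
      · exact absurd ((rel_trans h0c (rel_symm h1c)) w hwroot
          (Or.inl ⟨hc1, hnw1⟩)) hwcov
    rcases Finset.mem_union.mp he with heM | heU
    · obtain ⟨p, q, hepq, hpath⟩ := hcov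
      have hmem := (Finset.mem_filter.mp heM).2
      have hp : inT t I c p := hmem p (by rw [hepq]; exact Sym2.mem_mk_left p q)
      have hq : inT t I c q := hmem q (by rw [hepq]; exact Sym2.mem_mk_right p q)
      rcases hpath with ⟨h1, h2⟩ | ⟨h1, h2⟩
      · exact lemA p q h1 h2 hp hq
      · exact lemA q p h1 h2 hq hp
    · have hm := Finset.mem_filter.mp heU
      obtain ⟨a, u, heq, hinta, hlfa, huma, hupa⟩ := hm.2
      have hintu : inT t I c u := hclosed a u (heq ▸ hm.1) hinta hlfa huma
      obtain ⟨p, q, hepq, hpath⟩ := hcov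
      have hP : t.onPath w a u := by
        rcases Sym2.eq_iff.mp (heq.symm.trans hepq) with ⟨h1, h2⟩ | ⟨h1, h2⟩
        · rw [h1, h2]; exact hpath
        · rw [h1, h2]; exact hpath.symm
      rcases hP with ⟨h1, h2⟩ | ⟨h1, h2⟩
      · exact lemA a u h1 h2 hinta hintu
      · exact lemA u a h1 h2 hintu hinta
  · -- reverse direction: every edge of `T'` is covered
    intro hin
    by_contra hnc
    have hiff : ∀ x, inT t I (qm t I w) x ↔ t.desc w x := inT_qm_iff hwroot hwcov
    have hinw : inT t I c w := by
      obtain ⟨w', h1, h2⟩ := hin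
      exact ⟨w', Tree.desc_trans h1 (t.desc_parent w), h2⟩
    have hbelow : below t I c (qm t I w) :=
      inT_invar (rel_symm (rel_out_qm t I w)) hinw
    have hne : qm t I w ≠ c := by
      intro h
      have h1 := rel_out_qm t I w
      rw [h] at h1
      obtain ⟨w', hd, hr⟩ := hin
      have hrw : rel t I w' w := rel_trans hr h1
      have hdw : t.desc w w' := (rel_desc_iff hrw hwroot hwcov).mpr (Tree.desc_refl t w)
      have hdp : t.desc w (t.parent w) := Tree.desc_trans hdw hd
      have heqp : w = t.parent w := Tree.desc_antisymm hdp (t.desc_parent w)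
      exact hwroot (Tree.eq_root_of_parent_eq heqp.symm)
    refine hminimal (qm t I w) hbelow hne ⟨?_, ?_⟩
    · -- M-compatibility of the subtree at `w`
      intro e heM
      revert heM
      induction e using Sym2.inductionOn with
      | _ a b =>
        intro heM
        have key : ∀ p q : V, s(a, b) = s(p, q) → inT t I (qm t I w) p →
            ¬ inT t I (qm t I w) q → False := by
          intro p q heab hp hq
          have hdp : t.desc w p := (hiff p).mp hp
          have hdq : ¬ t.desc w q := fun h => hq ((hiff q).mpr h)
          have hincp : inT t I c p := inT_of_inT_qm hwroot hwcov hinw hp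
          rcases hcompat _ heM with hall | hnone
          · have heMl : s(a, b) ∈ MlinksQ t I M c := Finset.mem_filter.mpr ⟨heM, hall⟩
            exact hnc ⟨s(a, b), Finset.mem_union_left _ heMl, p, q, heab,
              Or.inl ⟨hdp, hdq⟩⟩
          · exact hnone p (by rw [heab]; exact Sym2.mem_mk_left p q) hincp
        by_cases ha : inT t I (qm t I w) a <;> by_cases hb : inT t I (qm t I w) b
        · exact Or.inl (fun x hx => by
            rcases Sym2.mem_iff.mp hx with rfl | rfl <;> assumption)
        · exact (key a b rfl ha hb).elim
        · exact (key b a Sym2.eq_swap hb ha).elim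
        · exact Or.inr (fun x hx => by
            rcases Sym2.mem_iff.mp hx with rfl | rfl <;> assumption)
    · -- closedness w.r.t. unmatched leaves of the subtree at `w`
      intro x y hxyE hx hlf hum
      by_contra hy
      have hdwx : t.desc w x := (hiff x).mp hx
      have hdwy : ¬ t.desc w y := fun h => hy ((hiff y).mpr h)
      have hnrel : ¬ rel t I y x := fun h => hy (inT_invar (rel_symm h) hx)
      have hxnp : x ≠ t.parent w := by
        intro h
        have hdp : t.desc w (t.parent w) := h ▸ hdwx
        have heqp : w = t.parent w := Tree.desc_antisymm hdp (t.desc_parent w)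
        exact hwroot (Tree.eq_root_of_parent_eq heqp.symm)
      have hshE : s(x, t.parent w) ∈ E :=
        hsh _ hxyE _ (fun hd => hxnp (Sym2.mk_isDiag_iff.mp hd))
          (shadow_parent hdwx hdwy)
      have hnrelp : ¬ rel t I (t.parent w) x := by
        intro h
        have hinp : inT t I (qm t I w) (t.parent w) := inT_invar (rel_symm h) hx
        have hdp : t.desc w (t.parent w) := (hiff _).mp hinp
        have heqp : w = t.parent w := Tree.desc_antisymm hdp (t.desc_parent w)
        exact hwroot (Tree.eq_root_of_parent_eq heqp.symm)
      obtain ⟨b, u, hbx, hbuE, hup⟩ := exists_upnode hxyE hnrel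
      have hdu : qdepth t I u ≤ qdepth t I (t.parent w) :=
        hup.2.2 x (t.parent w) (rel_refl t I x) hshE hnrelp
      have hndwu : ¬ t.desc w u := fun h =>
        absurd (qdepth_lt hwroot hwcov h) (not_lt.mpr hdu)
      have hincx : inT t I c x := inT_of_inT_qm hwroot hwcov hinw hx
      have hmemU : s(b, u) ∈ upOfQ t I E M c := Finset.mem_filter.mpr
        ⟨hbuE, b, u, rfl, inT_invar (rel_symm hbx) hincx, qleaf_invar hbx hlf,
          matched_invar hbx hum, qUpNode_invar hbx hup⟩
      have hdwb : t.desc w b := (hiff b).mp (inT_invar (rel_symm hbx) hx)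
      exact hnc ⟨s(b, u), Finset.mem_union_right _ hmemU, b, u, rfl,
        Or.inl ⟨hdwb, hndwu⟩⟩

end TAP
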